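/- arXiv:2408.15719 — 5 statements merged into one kernel-verified Lean document; each statement's English description precedes it below -/
import Mathlib

section
/- Let R = ℝ⟨⟨t⟩⟩ be the field of formal real Puiseux series with its natural valuation, and C = ℂ⟨⟨t⟩⟩ its algebraic closure. Let V ⊆ C^n be the zero set of a linear ideal I generated by linear forms with coefficients in R. If x ∈ V has all coordinates weakly positive (each coordinate has real positive leading coefficient), then x + x̄ ∈ V, all coordinates of x + x̄ are positive elements of R, and val(x + x̄) = val(x) coordinatewise. Consequently val(V ∩ C^n_{weakly>0}) = val(V ∩ R^n_{>0}). -/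
/-- Coefficientwise complex conjugation on formal (complex Puiseux/Hahn) series. -/
noncomputable def conjPS (x : HahnSeries ℚ ℂ) : HahnSeries ℚ ℂ where
  coeff q := starRingEnd ℂ (x.coeff q)
  isPWO_support' := by
    have h : (Function.support fun q => starRingEnd ℂ (x.coeff q)) = Function.support x.coeff := by
      ext q
      simp [Function.mem_support, map_eq_zero]
    rw [h]
    exact x.isPWO_support'

/-- A series is real if all its coefficients are real. -/
def IsRealPS (x : HahnSeries ℚ ℂ) : Prop := ∀ q : ℚ, (x.coeff q).im = 0

/-- A nonzero series is weakly positive if its leading coefficient is real and positive. -/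
def WeaklyPosPS (x : HahnSeries ℚ ℂ) : Prop :=
  x ≠ 0 ∧ x.leadingCoeff.im = 0 ∧ 0 < x.leadingCoeff.re

/-- A nonzero series is positive if it is real with positive leading coefficient. -/
def PosPS (x : HahnSeries ℚ ℂ) : Prop :=
  x ≠ 0 ∧ IsRealPS x ∧ 0 < x.leadingCoeff.re

/-!
Since the linear forms have real coefficients, conjugating an equation `∑ Lᵢ xᵢ = 0` gives
`∑ Lᵢ x̄ᵢ = 0`, so `V` is stable under `x ↦ x + x̄`. Coefficientwise, `x + x̄` has the real
coefficients `2 Re(cₖ)`; these vanish below `val x`, and at `val x` the leading coefficient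
`c` of a weakly positive `x` is real and positive, so `x + x̄` is positive with leading
coefficient `2c` and the same valuation. Positive series are weakly positive, which gives
the other inclusion of the valuation sets.
-/

namespace HahnSeries

variable {Γ R S : Type*} [AddCommMonoid Γ] [PartialOrder Γ] [IsOrderedCancelAddMonoid Γ]
  [Semiring R] [Semiring S]

noncomputable def mapRingHom (f : R →+* S) : HahnSeries Γ R →+* HahnSeries Γ S where
  toFun x := x.map f
  map_one' := HahnSeries.map_one f.toMonoidWithZeroHom
  map_mul' _ _ := HahnSeries.map_mul f.toNonUnitalRingHom
  map_zero' := HahnSeries.map_zero f.toAddMonoidHom.toZeroHom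
  map_add' _ _ := HahnSeries.map_add f.toAddMonoidHom

end HahnSeries

lemma conjPS_eq_mapRingHom (x : HahnSeries ℚ ℂ) :
    conjPS x = HahnSeries.mapRingHom (starRingEnd ℂ) x :=
  rfl

lemma conjPS_of_isRealPS {x : HahnSeries ℚ ℂ} (hx : IsRealPS x) : conjPS x = x :=
  HahnSeries.ext <| funext fun q => Complex.conj_eq_iff_im.2 (hx q)

lemma sum_mul_conjPS_eq_zero {α : Type*} {s : Finset α} {l x : α → HahnSeries ℚ ℂ}
    (hl : ∀ i ∈ s, IsRealPS (l i)) (h : ∑ i ∈ s, l i * x i = 0) :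
    ∑ i ∈ s, l i * conjPS (x i) = 0 := by
  have h' := congrArg (HahnSeries.mapRingHom (starRingEnd ℂ)) h
  simp only [map_sum, map_mul, map_zero, ← conjPS_eq_mapRingHom] at h'
  rwa [Finset.sum_congr rfl fun i hi => by rw [conjPS_of_isRealPS (hl i hi)]] at h'

lemma coeff_add_conjPS (x : HahnSeries ℚ ℂ) (q : ℚ) :
    (x + conjPS x).coeff q = ((2 * (x.coeff q).re : ℝ) : ℂ) := by
  rw [HahnSeries.coeff_add, ← Complex.re_add_im (x.coeff q)]
  change _ + (starRingEnd ℂ) _ = _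
  simp [Complex.add_conj]

lemma isRealPS_add_conjPS (x : HahnSeries ℚ ℂ) : IsRealPS (x + conjPS x) := fun q => by
  rw [coeff_add_conjPS, Complex.ofReal_im]

lemma coeff_order_add_conjPS_ne_zero {x : HahnSeries ℚ ℂ} (hx : x.leadingCoeff.re ≠ 0) :
    (x + conjPS x).coeff x.order ≠ 0 := by
  rw [coeff_add_conjPS, ← HahnSeries.leadingCoeff_eq]
  exact_mod_cast mul_ne_zero two_ne_zero hx

lemma order_add_conjPS {x : HahnSeries ℚ ℂ} (hx : x.leadingCoeff.re ≠ 0) :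
    (x + conjPS x).order = x.order := by
  have hc := coeff_order_add_conjPS_ne_zero hx
  refine le_antisymm (HahnSeries.order_le_of_coeff_ne_zero hc) <|
    (HahnSeries.le_order_iff_forall (HahnSeries.ne_zero_of_coeff_ne_zero hc)).2 fun j hj => ?_
  rw [coeff_add_conjPS, HahnSeries.coeff_eq_zero_of_lt_order hj]
  simp

lemma leadingCoeff_add_conjPS {x : HahnSeries ℚ ℂ} (hx : x.leadingCoeff.re ≠ 0) :
    (x + conjPS x).leadingCoeff = ((2 * x.leadingCoeff.re : ℝ) : ℂ) := by
  rw [HahnSeries.leadingCoeff_eq, order_add_conjPS hx, coeff_add_conjPS,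
    ← HahnSeries.leadingCoeff_eq]

lemma WeaklyPosPS.posPS_add_conjPS {x : HahnSeries ℚ ℂ} (hx : WeaklyPosPS x) :
    PosPS (x + conjPS x) := by
  have hre := hx.2.2
  refine ⟨HahnSeries.ne_zero_of_coeff_ne_zero (coeff_order_add_conjPS_ne_zero hre.ne'),
    isRealPS_add_conjPS x, ?_⟩
  rw [leadingCoeff_add_conjPS hre.ne', Complex.ofReal_re]
  positivity

lemma PosPS.weaklyPosPS {x : HahnSeries ℚ ℂ} (hx : PosPS x) : WeaklyPosPS x :=
  ⟨hx.1, by rw [HahnSeries.leadingCoeff_eq]; exact hx.2.1 _, hx.2.2⟩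

/-- Let `V ⊆ C^n` be the zero set of a linear ideal generated by linear
forms with real (Puiseux) coefficients, over `C = ℂ⟨⟨t⟩⟩` with real subfield `R = ℝ⟨⟨t⟩⟩`.
If `x ∈ V` has all coordinates weakly positive, then `x + x̄ ∈ V`, all coordinates of
`x + x̄` are positive elements of `R`, and `val (x + x̄) = val x` coordinatewise.
Consequently `val (V ∩ C^n_{weakly>0}) = val (V ∩ R^n_{>0})`. -/
theorem stmt3 {n : ℕ} {ι : Type*} (L : ι → Fin n → HahnSeries ℚ ℂ)
    (hL : ∀ k i, IsRealPS (L k i)) :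
    let V : Set (Fin n → HahnSeries ℚ ℂ) := {x | ∀ k, ∑ i, L k i * x i = 0}
    (∀ x ∈ V, (∀ i, WeaklyPosPS (x i)) →
      ((fun i => x i + conjPS (x i)) ∈ V ∧
        (∀ i, PosPS (x i + conjPS (x i))) ∧
        (∀ i, (x i + conjPS (x i)).order = (x i).order))) ∧
    {w : Fin n → ℚ | ∃ x ∈ V, (∀ i, WeaklyPosPS (x i)) ∧ ∀ i, (x i).order = w i}
      = {w : Fin n → ℚ | ∃ x ∈ V, (∀ i, PosPS (x i)) ∧ ∀ i, (x i).order = w i} := by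
  intro V
  have realPart : ∀ x ∈ V, (∀ i, WeaklyPosPS (x i)) →
      ((fun i => x i + conjPS (x i)) ∈ V ∧
        (∀ i, PosPS (x i + conjPS (x i))) ∧
        (∀ i, (x i + conjPS (x i)).order = (x i).order)) := by
    intro x hxV hpos
    refine ⟨fun k => ?_, fun i => (hpos i).posPS_add_conjPS,
      fun i => order_add_conjPS (hpos i).2.2.ne'⟩
    simp only [mul_add, Finset.sum_add_distrib, hxV k,
      sum_mul_conjPS_eq_zero (fun i _ => hL k i) (hxV k), add_zero]
  refine ⟨realPart, Set.ext fun w => ⟨?_, ?_⟩⟩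
  · rintro ⟨x, hxV, hpos, hw⟩
    obtain ⟨hmem, hposy, hord⟩ := realPart x hxV hpos
    exact ⟨_, hmem, hposy, fun i => (hord i).trans (hw i)⟩
  · rintro ⟨x, hxV, hpos, hw⟩
    exact ⟨x, hxV, fun i => (hpos i).weaklyPosPS, hw⟩
end

section
/- Let F = (f_1,…,f_m) be a polynomial system over a real closed field R with coefficient matrix C ∈ R^{m×r} and exponent matrix A ∈ ℤ^{n×r} of full rank n ≤ r, i.e. f_i(x) = Σ_j C_{ij} x^{a_j} where a_j are the columns of A. Then the map x ↦ x^A := (x^{a_1},…,x^{a_r}) is a bijection from the positive solution set {x ∈ R^n_{>0} : f_1(x)=⋯=f_m(x)=0} onto {z ∈ R^r_{>0} : Cz = 0, z ∈ im(φ_A)}, with inverse z ↦ z^B for any rational right inverse B of A (AB = Id). -/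
/-!
Writing `x^A` for the monomial map, `(x^A)^B = x^(AB) = x` for every positive `x` by the power
laws of `rpow`, so `z ↦ z^B` is a left inverse of `x ↦ x^A` on the positive orthant. Since
`C (x^A) = 0` is exactly the system `F x = 0`, the monomial map carries the positive solutions
into the target set, and the left inverse carries every `z = x^A` of the target back to `x`.
-/

section RationalPower

variable {R : Type*} [Field R] [LinearOrder R] (rpow : R → ℚ → R)

theorem rpow_one_left [IsStrictOrderedRing R]
    (hrpow_int : ∀ x : R, 0 < x → ∀ k : ℤ, rpow x (k : ℚ) = x ^ k)
    (hrpow_rpow : ∀ x : R, 0 < x → ∀ q q' : ℚ, rpow (rpow x q) q' = rpow x (q * q'))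
    (q : ℚ) : rpow 1 q = 1 := by
  have h0 : rpow 1 0 = 1 := by simpa using hrpow_int 1 one_pos 0
  simpa [h0] using hrpow_rpow 1 one_pos 0 q

theorem rpow_prod [IsStrictOrderedRing R]
    (hrpow_int : ∀ x : R, 0 < x → ∀ k : ℤ, rpow x (k : ℚ) = x ^ k)
    (hrpow_mul : ∀ x y : R, 0 < x → 0 < y → ∀ q : ℚ, rpow (x * y) q = rpow x q * rpow y q)
    (hrpow_rpow : ∀ x : R, 0 < x → ∀ q q' : ℚ, rpow (rpow x q) q' = rpow x (q * q'))
    {ι : Type*} (s : Finset ι) (f : ι → R) (hf : ∀ i ∈ s, 0 < f i) (q : ℚ) :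
    rpow (∏ i ∈ s, f i) q = ∏ i ∈ s, rpow (f i) q := by
  induction s using Finset.cons_induction with
  | empty => simpa using rpow_one_left rpow hrpow_int hrpow_rpow q
  | cons a s ha ih =>
    have hpos : ∀ i ∈ s, 0 < f i := fun i hi => hf i (Finset.mem_cons_of_mem hi)
    rw [Finset.prod_cons, Finset.prod_cons,
      hrpow_mul _ _ (hf a (Finset.mem_cons_self a s)) (Finset.prod_pos hpos), ih hpos]

theorem rpow_sum (hrpow_int : ∀ x : R, 0 < x → ∀ k : ℤ, rpow x (k : ℚ) = x ^ k)
    (hrpow_add : ∀ x : R, 0 < x → ∀ q q' : ℚ, rpow x (q + q') = rpow x q * rpow x q')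
    {x : R} (hx : 0 < x) {ι : Type*} (s : Finset ι) (g : ι → ℚ) :
    rpow x (∑ j ∈ s, g j) = ∏ j ∈ s, rpow x (g j) := by
  induction s using Finset.cons_induction with
  | empty => simpa using hrpow_int x hx 0
  | cons a s ha ih => rw [Finset.sum_cons, Finset.prod_cons, hrpow_add x hx, ih]

end RationalPower

section MonomialMap

variable {R : Type*} [Field R] {ι κ : Type*} [Fintype ι]

/-- `x ↦ x^A`, the map `φ_A`. -/
def monomialMap (A : Matrix ι κ ℤ) (x : ι → R) : κ → R := fun j => ∏ i, x i ^ A i j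

/-- `z ↦ z^B`. -/
def rootMap [Fintype κ] (rpow : R → ℚ → R) (B : Matrix κ ι ℚ) (z : κ → R) : ι → R :=
  fun i => ∏ j, rpow (z j) (B j i)

theorem monomialMap_pos [LinearOrder R] [IsStrictOrderedRing R] (A : Matrix ι κ ℤ) {x : ι → R}
    (hx : ∀ i, 0 < x i) (j : κ) :
    0 < monomialMap A x j :=
  Finset.prod_pos fun i _ => zpow_pos (hx i) _

theorem rootMap_monomialMap [LinearOrder R] [IsStrictOrderedRing R] [Fintype κ] [DecidableEq ι]
    (rpow : R → ℚ → R)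
    (hrpow_int : ∀ x : R, 0 < x → ∀ k : ℤ, rpow x (k : ℚ) = x ^ k)
    (hrpow_add : ∀ x : R, 0 < x → ∀ q q' : ℚ, rpow x (q + q') = rpow x q * rpow x q')
    (hrpow_mul : ∀ x y : R, 0 < x → 0 < y → ∀ q : ℚ, rpow (x * y) q = rpow x q * rpow y q)
    (hrpow_rpow : ∀ x : R, 0 < x → ∀ q q' : ℚ, rpow (rpow x q) q' = rpow x (q * q'))
    {A : Matrix ι κ ℤ} {B : Matrix κ ι ℚ} (hB : A.map ((↑) : ℤ → ℚ) * B = 1)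
    {x : ι → R} (hx : ∀ i, 0 < x i) :
    rootMap rpow B (monomialMap A x) = x := by
  funext i
  have hAB : ∀ k, ∑ j, (A k j : ℚ) * B j i = if k = i then 1 else 0 := fun k => by
    simpa [Matrix.mul_apply, Matrix.one_apply] using congrFun (congrFun hB k) i
  calc ∏ j, rpow (∏ k, x k ^ A k j) (B j i)
      = ∏ j, ∏ k, rpow (x k) ((A k j : ℚ) * B j i) := by
        refine Finset.prod_congr rfl fun j _ => ?_
        rw [rpow_prod rpow hrpow_int hrpow_mul hrpow_rpow _ _ fun k _ => zpow_pos (hx k) _]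
        refine Finset.prod_congr rfl fun k _ => ?_
        rw [← hrpow_int (x k) (hx k), hrpow_rpow _ (hx k)]
    _ = ∏ k, rpow (x k) (∑ j, (A k j : ℚ) * B j i) := by
        rw [Finset.prod_comm]
        exact Finset.prod_congr rfl fun k _ =>
          (rpow_sum rpow hrpow_int hrpow_add (hx k) _ _).symm
    _ = x i := by
        simp_rw [hAB]
        rw [Finset.prod_eq_single i (fun k _ hk => by simpa [hk] using hrpow_int (x k) (hx k) 0)
          (fun h => absurd (Finset.mem_univ i) h)]
        simpa using hrpow_int (x i) (hx i) 1

end MonomialMap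

theorem stmt4_general {R : Type*} [Field R] [LinearOrder R] [IsStrictOrderedRing R]
    -- rational powers of positive elements, via unique positive roots
    (rpow : R → ℚ → R)
    (hrpow_int : ∀ x : R, 0 < x → ∀ k : ℤ, rpow x (k : ℚ) = x ^ k)
    (hrpow_add : ∀ x : R, 0 < x → ∀ q q' : ℚ, rpow x (q + q') = rpow x q * rpow x q')
    (hrpow_mul : ∀ x y : R, 0 < x → 0 < y → ∀ q : ℚ, rpow (x * y) q = rpow x q * rpow y q)
    (hrpow_rpow : ∀ x : R, 0 < x → ∀ q q' : ℚ, rpow (rpow x q) q' = rpow x (q * q'))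
    {n m r : ℕ}
    (C : Matrix (Fin m) (Fin r) R) (A : Matrix (Fin n) (Fin r) ℤ)
    (B : Matrix (Fin r) (Fin n) ℚ) (hB : (A.map ((↑) : ℤ → ℚ)) * B = 1) :
    let φ : (Fin n → R) → (Fin r → R) := fun x j => ∏ i, x i ^ A i j
    let ψ : (Fin r → R) → (Fin n → R) := fun z i => ∏ j, rpow (z j) (B j i)
    let S₁ : Set (Fin n → R) :=
      {x | (∀ i, 0 < x i) ∧ ∀ k, ∑ j, C k j * ∏ i, x i ^ A i j = 0}
    let S₂ : Set (Fin r → R) :=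
      {z | (∀ j, 0 < z j) ∧ (∀ k, ∑ j, C k j * z j = 0) ∧
        ∃ x : Fin n → R, (∀ i, 0 < x i) ∧ ∀ j, z j = ∏ i, x i ^ A i j}
    Set.BijOn φ S₁ S₂ ∧ Set.InvOn ψ φ S₁ S₂ := by
  intro φ ψ S₁ S₂
  have hleft : ∀ x, (∀ i, 0 < x i) → ψ (φ x) = x := fun x hx =>
    rootMap_monomialMap rpow hrpow_int hrpow_add hrpow_mul hrpow_rpow hB hx
  have hinv : Set.InvOn ψ φ S₁ S₂ := by
    refine ⟨fun x hx => hleft x hx.1, ?_⟩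
    rintro z ⟨-, -, x, hx, hzx⟩
    obtain rfl : z = φ x := funext hzx
    exact congrArg φ (hleft x hx)
  have hφ : Set.MapsTo φ S₁ S₂ := fun x ⟨hx, hC⟩ =>
    ⟨monomialMap_pos A hx, hC, x, hx, fun _ => rfl⟩
  have hψ : Set.MapsTo ψ S₂ S₁ := by
    rintro z ⟨-, hC, x, hx, hzx⟩
    obtain rfl : z = φ x := funext hzx
    show ψ (φ x) ∈ S₁
    rw [hleft x hx]
    exact ⟨hx, hC⟩
  exact ⟨hinv.bijOn hφ hψ, hinv⟩

/-- Let `F = (f₁,…,f_m)` be a polynomial system over a real closed field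
`R` with coefficient matrix `C ∈ R^{m×r}` and exponent matrix `A ∈ ℤ^{n×r}` of full rank
`n ≤ r`, i.e. `f_i x = ∑_j C i j * x ^ a_j` (columns `a_j` of `A`). Then `x ↦ x^A` maps the
positive solution set bijectively onto `{z ∈ R^r_{>0} : Cz = 0, z ∈ φ_A(R^n_{>0})}`, with
inverse `z ↦ z^B` for any rational right inverse `B` of `A` (rational powers of positive
elements via unique positive roots, encoded by `rpow`). -/
theorem stmt4 {R : Type*} [Field R] [LinearOrder R] [IsStrictOrderedRing R]
    -- real closedness of `R`
    (hsq : ∀ x : R, 0 ≤ x → ∃ y : R, y ^ 2 = x)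
    (hodd : ∀ p : Polynomial R, Odd p.natDegree → ∃ x : R, p.eval x = 0)
    -- rational powers of positive elements, via unique positive roots
    (rpow : R → ℚ → R)
    (hrpow_pos : ∀ x : R, 0 < x → ∀ q : ℚ, 0 < rpow x q)
    (hrpow_int : ∀ x : R, 0 < x → ∀ k : ℤ, rpow x (k : ℚ) = x ^ k)
    (hrpow_add : ∀ x : R, 0 < x → ∀ q q' : ℚ, rpow x (q + q') = rpow x q * rpow x q')
    (hrpow_mul : ∀ x y : R, 0 < x → 0 < y → ∀ q : ℚ, rpow (x * y) q = rpow x q * rpow y q)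
    (hrpow_rpow : ∀ x : R, 0 < x → ∀ q q' : ℚ, rpow (rpow x q) q' = rpow x (q * q'))
    {n m r : ℕ} (hnr : n ≤ r)
    (C : Matrix (Fin m) (Fin r) R) (A : Matrix (Fin n) (Fin r) ℤ)
    (hrank : (A.map ((↑) : ℤ → ℚ)).rank = n)
    (B : Matrix (Fin r) (Fin n) ℚ) (hB : (A.map ((↑) : ℤ → ℚ)) * B = 1) :
    let φ : (Fin n → R) → (Fin r → R) := fun x j => ∏ i, x i ^ A i j
    let ψ : (Fin r → R) → (Fin n → R) := fun z i => ∏ j, rpow (z j) (B j i)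
    let S₁ : Set (Fin n → R) :=
      {x | (∀ i, 0 < x i) ∧ ∀ k, ∑ j, C k j * ∏ i, x i ^ A i j = 0}
    let S₂ : Set (Fin r → R) :=
      {z | (∀ j, 0 < z j) ∧ (∀ k, ∑ j, C k j * z j = 0) ∧
        ∃ x : Fin n → R, (∀ i, 0 < x i) ∧ ∀ j, z j = ∏ i, x i ^ A i j}
    Set.BijOn φ S₁ S₂ ∧ Set.InvOn ψ φ S₁ S₂ :=
  stmt4_general rpow hrpow_int hrpow_add hrpow_mul hrpow_rpow C A B hB
end

section
/- Let Y_A ⊆ (C*)^m be the torus image of the monomial map φ_A given by a matrix A ∈ ℤ^{n×m} of rank n, over the algebraic closure C of a non-trivially real-closed valued field R with value group ℝ. Then the positive tropicalization of Y_A equals the row span of A: Trop⁺(Y_A) = rowspan(A) ⊆ ℝ^m. -/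
/-!
A point `x ∈ R^n_{>0}` is sent by `φ_A` to the monomials `∏ᵢ xᵢ ^ A i j`, whose valuations are
`∑ᵢ A i j * ν xᵢ` because `ν` is a homomorphism on units. Since `ν` takes every real value on
`R_{>0}`, the valuations of the positive points of `Y_A` fill out exactly the row span of `A`,
which is a linear subspace of `ℝ^m` and hence already closed.
-/

open Matrix

section Valuation

variable {G₀ : Type*} [CommGroupWithZero G₀] (ν : G₀ → ℝ)
  (hmul : ∀ x y : G₀, x ≠ 0 → y ≠ 0 → ν (x * y) = ν x + ν y)
include hmul

def unitsValuationHom : G₀ˣ →* Multiplicative ℝ :=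
  MonoidHom.mk' (fun u => .ofAdd (ν u)) fun u v => by
    rw [Units.val_mul, hmul _ _ u.ne_zero v.ne_zero, ofAdd_add]

theorem val_prod_zpow {ι : Type*} (s : Finset ι) (x : ι → G₀) (hx : ∀ i, x i ≠ 0)
    (a : ι → ℤ) : ν (∏ i ∈ s, x i ^ a i) = ∑ i ∈ s, (a i : ℝ) * ν (x i) := by
  let u : ι → G₀ˣ := fun i => Units.mk0 (x i) (hx i)
  have hprod : ∏ i ∈ s, x i ^ a i = ((∏ i ∈ s, u i ^ a i : G₀ˣ) : G₀) := by
    rw [Units.coe_prod]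
    simp only [Units.val_zpow_eq_zpow_val, u, Units.val_mk0]
  calc ν (∏ i ∈ s, x i ^ a i)
      = (unitsValuationHom ν hmul (∏ i ∈ s, u i ^ a i)).toAdd := by rw [hprod]; rfl
    _ = ∑ i ∈ s, (a i : ℝ) * ν (x i) := by
      simp only [map_prod, map_zpow, toAdd_prod, toAdd_zpow, zsmul_eq_mul]
      rfl

end Valuation

theorem isClosed_setOf_rowSpan {ι κ : Type*} [Fintype ι] [Finite κ] (B : Matrix ι κ ℝ) :
    IsClosed {w : κ → ℝ | ∃ v : ι → ℝ, ∀ j, w j = ∑ i, B i j * v i} := by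
  have hrange : {w : κ → ℝ | ∃ v : ι → ℝ, ∀ j, w j = ∑ i, B i j * v i}
      = LinearMap.range B.vecMulLinear := by
    ext w
    simp only [Set.mem_ofPred_eq, SetLike.mem_coe, LinearMap.mem_range, vecMulLinear_apply,
      funext_iff, vecMul, dotProduct, mul_comm, eq_comm]
  rw [hrange]
  exact Submodule.closed_of_finiteDimensional _

theorem setOf_val_prod_zpow_of_pos_eq_rowSpan {R : Type*} [Field R] [Preorder R]
    (ν : R → ℝ) (hmul : ∀ x y : R, x ≠ 0 → y ≠ 0 → ν (x * y) = ν x + ν y)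
    (hsurj : ∀ u : ℝ, ∃ r : R, 0 < r ∧ ν r = u) {ι κ : Type*} [Fintype ι] (A : Matrix ι κ ℤ) :
    {w : κ → ℝ | ∃ x : ι → R, (∀ i, 0 < x i) ∧ ∀ j, ν (∏ i, x i ^ A i j) = w j}
      = {w : κ → ℝ | ∃ v : ι → ℝ, ∀ j, w j = ∑ i, (A i j : ℝ) * v i} := by
  ext w
  constructor
  · rintro ⟨x, hx, hw⟩
    refine ⟨fun i => ν (x i), fun j => ?_⟩
    rw [← hw j, val_prod_zpow ν hmul _ x (fun i => (hx i).ne')]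
  · rintro ⟨v, hv⟩
    choose x hx hνx using fun i => hsurj (v i)
    refine ⟨x, hx, fun j => ?_⟩
    simp only [val_prod_zpow ν hmul _ x (fun i => (hx i).ne'), hνx, hv j]

theorem stmt8_general {R : Type*} [Field R] [LinearOrder R]
    -- the valuation, with value group `ℝ` hit by positive elements
    (ν : R → ℝ)
    (hmul : ∀ x y : R, x ≠ 0 → y ≠ 0 → ν (x * y) = ν x + ν y)
    (hsurj : ∀ u : ℝ, ∃ r : R, 0 < r ∧ ν r = u)
    {n m : ℕ} (A : Matrix (Fin n) (Fin m) ℤ) :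
    closure {w : Fin m → ℝ |
        ∃ x : Fin n → R, (∀ i, 0 < x i) ∧ ∀ j, ν (∏ i, x i ^ A i j) = w j}
      = {w : Fin m → ℝ | ∃ v : Fin n → ℝ, ∀ j, w j = ∑ i, (A i j : ℝ) * v i} := by
  rw [setOf_val_prod_zpow_of_pos_eq_rowSpan ν hmul hsurj A]
  exact (isClosed_setOf_rowSpan _).closure_eq

/-- Let `Y_A` be the torus image of the monomial map `φ_A` given by
`A ∈ ℤ^{n×m}` of rank `n`, over a non-trivially valued real closed field `R` with value
group `ℝ`. Since `Y_A ∩ R^m_{>0} = φ_A(R^n_{>0})`, the positive tropicalization of `Y_A`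
(the closure of the valuations of its positive points) equals the row span of `A`. -/
theorem stmt8 {R : Type*} [Field R] [LinearOrder R] [IsStrictOrderedRing R]
    -- real closedness of `R`
    (hsq : ∀ x : R, 0 ≤ x → ∃ y : R, y ^ 2 = x)
    (hodd : ∀ p : Polynomial R, Odd p.natDegree → ∃ x : R, p.eval x = 0)
    -- the valuation, with value group `ℝ` hit by positive elements
    (ν : R → ℝ)
    (hmul : ∀ x y : R, x ≠ 0 → y ≠ 0 → ν (x * y) = ν x + ν y)
    (hsurj : ∀ u : ℝ, ∃ r : R, 0 < r ∧ ν r = u)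
    {n m : ℕ} (A : Matrix (Fin n) (Fin m) ℤ)
    (hrank : (A.map ((↑) : ℤ → ℚ)).rank = n) :
    closure {w : Fin m → ℝ |
        ∃ x : Fin n → R, (∀ i, 0 < x i) ∧ ∀ j, ν (∏ i, x i ^ A i j) = w j}
      = {w : Fin m → ℝ | ∃ v : Fin n → ℝ, ∀ j, w j = ∑ i, (A i j : ℝ) * v i} :=
  stmt8_general ν hmul hsurj A
end

section
/- Let V ⊆ ℝ^n be a linear subspace realizing an oriented matroid M with signed circuits 𝔠, where a signed circuit C = (C⁺,C⁻) corresponds to a support-minimal linear form l = Σ_{i∈C⁺} a_i x_i − Σ_{j∈C⁻} b_j x_j (a_i, b_j > 0) vanishing on V. If w ∈ ℝ^n is the valuation of a point x of the Puiseux-series extension V_{ℝ⟨⟨t⟩⟩} with all coordinates positive, then for every signed circuit C of M, both in_w(C)⁺ and in_w(C)⁻ are nonempty. In other words, val(V_{ℝ⟨⟨t⟩⟩} ∩ ℝ⟨⟨t⟩⟩^n_{>0}) ⊆ B̃⁺(M). -/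
/-- A formal real Puiseux series (modelled as a Hahn series over `ℚ` with real
coefficients) is positive iff it is nonzero with positive leading coefficient. -/
def PosPuiseux (x : HahnSeries ℚ ℝ) : Prop := x ≠ 0 ∧ 0 < x.leadingCoeff

/-- Let `V ⊆ ℝ^n` realize an oriented matroid `M`: a signed circuit
`C = (C⁺, C⁻)` corresponds to a support-minimal linear form
`∑_{i ∈ C⁺} a_i x_i − ∑_{j ∈ C⁻} b_j x_j` (with `a_i, b_j > 0`) vanishing on `V`. If `w`
is the coordinatewise valuation of a point `x` of the Puiseux extension `V_{ℝ⟨⟨t⟩⟩}` with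
all coordinates positive, then for every signed circuit `C`, both `in_w(C)⁺` and
`in_w(C)⁻` are nonempty; i.e. `val(V_{ℝ⟨⟨t⟩⟩} ∩ ℝ⟨⟨t⟩⟩^n_{>0}) ⊆ B̃⁺(M)`. -/
theorem stmt10 {n : ℕ} (Cp Cm : Finset (Fin n)) (hdisj : Disjoint Cp Cm)
    (hne : (Cp ∪ Cm).Nonempty)
    (ℓ : Fin n → ℝ)
    (hp : ∀ i ∈ Cp, 0 < ℓ i) (hm : ∀ i ∈ Cm, ℓ i < 0)
    (h0 : ∀ i, i ∉ Cp ∪ Cm → ℓ i = 0)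
    (x : Fin n → HahnSeries ℚ ℝ) (hx : ∀ i, PosPuiseux (x i))
    (hvan : ∑ i, HahnSeries.C (ℓ i) * x i = 0)
    (w : Fin n → ℚ) (hw : ∀ i, (x i).order = w i) :
    (∃ i ∈ Cp, ∀ j ∈ Cp ∪ Cm, w i ≤ w j) ∧
    (∃ i ∈ Cm, ∀ j ∈ Cp ∪ Cm, w i ≤ w j) := by
  have hx' : ∀ i, x i ≠ 0 ∧ 0 < (x i).leadingCoeff := hx
  classical
  set S := Cp ∪ Cm with hS
  set m := S.inf' hne w with hmdef
  have hmin : ∀ j ∈ S, m ≤ w j := fun j hj => Finset.inf'_le _ hj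
  obtain ⟨i1, hi1S, hi1⟩ := Finset.exists_mem_eq_inf' hne w
  -- coefficient of the vanishing sum at exponent m
  have hc : ∑ i, ℓ i * (x i).coeff m = 0 := by
    have := congrArg (HahnSeries.coeff.addMonoidHom (R := ℝ) m) hvan
    rw [map_sum, map_zero] at this
    simpa [HahnSeries.coeff.addMonoidHom, HahnSeries.C_mul_eq_smul] using this
  set T := S.filter (fun i => w i = m) with hT
  have h1 : ∑ i ∈ T, ℓ i * (x i).coeff m = ∑ i, ℓ i * (x i).coeff m := by
    apply Finset.sum_subset (Finset.subset_univ T)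
    intro i _ hiT
    by_cases hiS : i ∈ S
    · have hwi : w i ≠ m := fun h => hiT (Finset.mem_filter.mpr ⟨hiS, h⟩)
      have hlt : m < w i := lt_of_le_of_ne (hmin i hiS) (Ne.symm hwi)
      rw [HahnSeries.coeff_eq_zero_of_lt_order (by rw [hw i]; exact hlt), mul_zero]
    · rw [h0 i hiS, zero_mul]
  have hTsum : ∑ i ∈ T, ℓ i * (x i).leadingCoeff = 0 := by
    rw [show ∑ i ∈ T, ℓ i * (x i).leadingCoeff = ∑ i ∈ T, ℓ i * (x i).coeff m from
      Finset.sum_congr rfl (fun i hi => by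
        rw [HahnSeries.leadingCoeff_eq, hw i, (Finset.mem_filter.mp hi).2]), h1, hc]
  set Tp := Cp.filter (fun i => w i = m) with hTp
  set Tm := Cm.filter (fun i => w i = m) with hTm
  have hTunion : T = Tp ∪ Tm := by
    rw [hT, hTp, hTm, hS, Finset.filter_union]
  have hdisj' : Disjoint Tp Tm :=
    hdisj.mono (Finset.filter_subset _ _) (Finset.filter_subset _ _)
  have hsplit : ∑ i ∈ Tp, ℓ i * (x i).leadingCoeff + ∑ i ∈ Tm, ℓ i * (x i).leadingCoeff = 0 := by
    rw [← Finset.sum_union hdisj', ← hTunion, hTsum]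
  have hi1T : i1 ∈ T := Finset.mem_filter.mpr ⟨hi1S, hi1.symm⟩
  have hTpne : Tp.Nonempty := by
    by_contra hTpe
    rw [Finset.not_nonempty_iff_eq_empty] at hTpe
    have hTmne : Tm.Nonempty := by
      rcases Finset.mem_union.mp (hTunion ▸ hi1T) with h | h
      · exact absurd h (by simp [hTpe])
      · exact ⟨i1, h⟩
    have hneg : ∑ i ∈ Tm, ℓ i * (x i).leadingCoeff < 0 := by
      apply Finset.sum_neg (fun i hi => ?_) hTmne
      have hi' := Finset.mem_filter.mp hi
      exact mul_neg_of_neg_of_pos (hm i hi'.1) (hx' i).2 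
    rw [hTpe, Finset.sum_empty, zero_add] at hsplit
    exact absurd hsplit hneg.ne
  have hTmne : Tm.Nonempty := by
    by_contra hTme
    rw [Finset.not_nonempty_iff_eq_empty] at hTme
    have hpos : 0 < ∑ i ∈ Tp, ℓ i * (x i).leadingCoeff := by
      apply Finset.sum_pos (fun i hi => ?_) hTpne
      have hi' := Finset.mem_filter.mp hi
      exact mul_pos (hp i hi'.1) (hx' i).2 
    rw [hTme, Finset.sum_empty, add_zero] at hsplit
    exact absurd hsplit hpos.ne'
  obtain ⟨ip, hip⟩ := hTpne
  obtain ⟨im, him⟩ := hTmne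
  have hip' := Finset.mem_filter.mp hip
  have him' := Finset.mem_filter.mp him
  exact ⟨⟨ip, hip'.1, fun j hj => hip'.2 ▸ hmin j hj⟩,
         ⟨im, him'.1, fun j hj => him'.2 ▸ hmin j hj⟩⟩
end

section
/- Let C be an algebraically closed valued field with valuation ring C° (a domain). For any ideal I ⊆ C[x₁^±,…,x_n^±], the intersection I ∩ C°[x₁^±,…,x_n^±] is a finitely generated ideal of the Laurent polynomial ring over C°. -/
/-!
Present the Laurent polynomial ring over `O` as a quotient of a polynomial ring `O[y]`; it then
suffices to show that `J = I ∩ O[y]` is finitely generated for an ideal `I` of `K[y]`. Such a `J`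
is saturated: `c • f ∈ J` with `c ≠ 0` forces `f ∈ J`. Homogenizing reduces to a homogeneous
saturated `J`. Each graded piece `J_d` is then a saturated submodule of a finite free `O`-module;
the quotient is torsion-free, hence flat, hence free over the valuation ring `O`, so `J_d` is
finitely generated. By Hilbert's basis theorem the special fibre of `J` in `k[y]` is generated by
the reductions of finitely many homogeneous `g_i ∈ J`. A homogeneous element of `J` reducing to
zero is its content `c ∈ 𝔪` times an element of `J_d`, so `J_d ⊆ (g) + 𝔪 J_d`, and Nakayama gives
`J = (g)`.
-/

open MvPolynomial

section ValuationRing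

variable {R M : Type*} [CommRing R] [IsDomain R] [ValuationRing R]
  [AddCommGroup M] [Module R M]

theorem Submodule.fg_of_smul_mem_imp_mem [Module.Finite R M] (N : Submodule R M)
    (hN : ∀ c : R, c ≠ 0 → ∀ x, c • x ∈ N → x ∈ N) : N.FG := by
  have : Module.Flat R (M ⧸ N) := by
    refine Module.Flat.flat_iff_torsion_eq_bot_of_isBezout.2 (eq_bot_iff.2 ?_)
    rintro q ⟨⟨c, hc⟩, hcq⟩
    induction q using Submodule.Quotient.induction_on with | _ x => ?_
    rw [Submodule.mem_bot, Submodule.Quotient.mk_eq_zero]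
    rw [Submonoid.mk_smul, ← Submodule.Quotient.mk_smul, Submodule.Quotient.mk_eq_zero] at hcq
    exact hN c (nonZeroDivisors.ne_zero hc) x hcq
  have : Module.Free R (M ⧸ N) := Module.free_of_flat_of_isLocalRing
  have : Module.FinitePresentation R (M ⧸ N) := Module.finitePresentation_of_projective _ _
  simpa using Module.FinitePresentation.fg_ker N.mkQ N.mkQ_surjective

theorem Submodule.FG.inf_of_smul_mem_imp_mem {N H : Submodule R M} (hH : H.FG)
    (hN : ∀ c : R, c ≠ 0 → ∀ x, c • x ∈ N → x ∈ N) : (N ⊓ H).FG := by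
  have : Module.Finite R H := Module.Finite.iff_fg.2 hH
  have := (Submodule.fg_of_smul_mem_imp_mem (N.comap H.subtype)
    fun c hc x => hN c hc x).map H.subtype
  rwa [Submodule.map_comap_subtype, inf_comm] at this

end ValuationRing

theorem MvPolynomial.exists_eq_C_mul_of_coeff_mem {R σ : Type*} [CommRing R] [IsBezout R]
    {I : Ideal R} {p : MvPolynomial σ R} (hp : ∀ μ, coeff μ p ∈ I) :
    ∃ c ∈ I, ∃ q, p = C c * q := by
  obtain ⟨c, hc⟩ := IsBezout.isPrincipal_of_FG (Ideal.span (p.coeffs : Set R)) ⟨_, rfl⟩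
  have hcoeff : ∀ μ, coeff μ p ∈ Ideal.span {c} := fun μ => by
    rw [← Ideal.submodule_span_eq, ← hc]
    by_cases h : coeff μ p = 0
    · simp [h]
    · exact Ideal.subset_span (coeff_mem_coeffs μ h)
  have hle : Ideal.span (p.coeffs : Set R) ≤ I :=
    Ideal.span_le.2 fun a ha => by
      obtain ⟨μ, -, rfl⟩ := mem_coeffs_iff.1 ha
      exact hp μ
  have hpC : p ∈ Ideal.span {C c} := by
    rw [← Set.image_singleton, ← Ideal.map_span]
    exact mem_map_C_iff.2 hcoeff
  obtain ⟨q, hq⟩ := Ideal.mem_span_singleton'.1 hpC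
  exact ⟨c, hle (hc ▸ Submodule.mem_span_singleton_self c), q, by rw [← hq, mul_comm]⟩

theorem Ideal.IsHomogeneous.exists_finset_map_eq {ι σ A B : Type*} [Semiring A] [SetLike σ A]
    [AddSubmonoidClass σ A] {𝒜 : ι → σ} [DecidableEq ι] [AddMonoid ι] [GradedRing 𝒜]
    {J : Ideal A} (hJ : J.IsHomogeneous 𝒜) [Semiring B] [IsNoetherianRing B] (f : A →+* B) :
    ∃ T : Finset A, (∀ t ∈ T, SetLike.IsHomogeneousElem 𝒜 t) ∧ (↑T : Set A) ⊆ J ∧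
      (Ideal.span ↑T).map f = J.map f := by
  classical
  obtain ⟨S, rfl⟩ := (Ideal.IsHomogeneous.iff_exists 𝒜 J).1 hJ
  have hfg := IsNoetherian.noetherian ((Ideal.span (Subtype.val '' S)).map f)
  rw [Ideal.map_span] at hfg ⊢
  obtain ⟨s, hsS, hspan⟩ := (Submodule.fg_span_iff_fg_span_finset_subset _).1 hfg
  obtain ⟨T, hTS, rfl⟩ := Finset.subset_set_image_iff.1 hsS
  refine ⟨T, fun t ht => ?_, hTS.trans Ideal.subset_span, ?_⟩
  · obtain ⟨⟨t, ht'⟩, -, rfl⟩ := hTS ht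
    exact ht'
  · rw [Ideal.map_span, ← Finset.coe_image, ← Ideal.submodule_span_eq, ← hspan]

namespace MvPolynomial

variable {R σ : Type*} [CommRing R]

attribute [local instance] gradedAlgebra

theorem homogeneousComponent_map {S : Type*} [CommRing S] (f : R →+* S) (n : ℕ)
    (p : MvPolynomial σ R) :
    homogeneousComponent n (map f p) = map f (homogeneousComponent n p) := by
  ext μ
  simp only [coeff_homogeneousComponent, coeff_map]
  split_ifs <;> simp

theorem mem_smul_inf_homogeneousSubmodule [IsDomain R] [IsBezout R] {I : Ideal R}
    {J : Ideal (MvPolynomial σ R)} (hJ : ∀ c : R, c ≠ 0 → ∀ f, c • f ∈ J → f ∈ J)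
    {n : ℕ} {p : MvPolynomial σ R} (hpJ : p ∈ J) (hpn : p ∈ homogeneousSubmodule σ R n)
    (hpI : ∀ μ, coeff μ p ∈ I) :
    p ∈ I • (J.restrictScalars R ⊓ homogeneousSubmodule σ R n) := by
  obtain ⟨c, hcI, q, rfl⟩ := exists_eq_C_mul_of_coeff_mem hpI
  rcases eq_or_ne c 0 with rfl | hc
  · simp
  have hqJ : q ∈ J := hJ c hc q (by rwa [smul_eq_C_mul])
  have hqn : q ∈ homogeneousSubmodule σ R n := fun μ hμ =>
    hpn (by rw [coeff_C_mul]; exact mul_ne_zero hc hμ)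
  rw [← smul_eq_C_mul]
  exact Submodule.smul_mem_smul hcI ⟨hqJ, hqn⟩

theorem fg_of_isHomogeneous_of_smul_mem_imp_mem [IsDomain R] [ValuationRing R] [Finite σ]
    {J : Ideal (MvPolynomial σ R)} (hJ : J.IsHomogeneous (homogeneousSubmodule σ R))
    (hsat : ∀ c : R, c ≠ 0 → ∀ f, c • f ∈ J → f ∈ J) : J.FG := by
  set red : MvPolynomial σ R →+* MvPolynomial σ (IsLocalRing.ResidueField R) :=
    map (IsLocalRing.residue R)
  obtain ⟨T, hThom, hTJ, hTred⟩ := hJ.exists_finset_map_eq red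
  set P := Ideal.span (T : Set (MvPolynomial σ R))
  have hP : P.IsHomogeneous (homogeneousSubmodule σ R) := Ideal.homogeneous_span _ _ hThom
  have hlayer :
      ∀ n, J.restrictScalars R ⊓ homogeneousSubmodule σ R n ≤ P.restrictScalars R := by
    intro n
    refine Submodule.le_of_le_smul_of_le_jacobson_bot
      ((homogeneousSubmodule_fg σ R n).inf_of_smul_mem_imp_mem hsat)
      (IsLocalRing.maximalIdeal_le_jacobson _) ?_
    rintro p ⟨hpJ, hpn⟩
    obtain ⟨w, hwP, hw⟩ := (Ideal.mem_map_iff_of_surjective red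
      (map_surjective _ IsLocalRing.residue_surjective)).1 (hTred ▸ Ideal.mem_map_of_mem red hpJ)
    have hsplit : p = homogeneousComponent n w + homogeneousComponent n (p - w) := by
      rw [map_sub, add_sub_cancel, homogeneousComponent_eq_self hpn]
    rw [hsplit]
    refine Submodule.add_mem_sup (homogeneousComponent_mem_of_mem hP hwP n)
      (mem_smul_inf_homogeneousSubmodule hsat
        (homogeneousComponent_mem_of_mem hJ (J.sub_mem hpJ (Ideal.span_le.2 hTJ hwP)) n)
        (homogeneousComponent_mem n _) fun μ => ?_)
    have : red (homogeneousComponent n (p - w)) = 0 := by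
      rw [← homogeneousComponent_map, map_sub, hw, sub_self, map_zero]
    rw [← IsLocalRing.residue_eq_zero_iff, ← coeff_map, this, coeff_zero]
  refine ⟨T, le_antisymm (Ideal.span_le.2 hTJ) fun p hp => ?_⟩
  exact (mem_iff_homogeneousComponent_mem hP p).2 fun n =>
    hlayer n ⟨homogeneousComponent_mem_of_mem hJ hp n, homogeneousComponent_mem n p⟩

theorem _root_.Ideal.IsHomogeneous.comap_map {S : Type*} [CommRing S] (f : R →+* S)
    {I : Ideal (MvPolynomial σ S)} (hI : I.IsHomogeneous (homogeneousSubmodule σ S)) :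
    (I.comap (map f)).IsHomogeneous (homogeneousSubmodule σ R) := fun n p hp => by
  rw [Ideal.mem_comap, ← DirectSum.Decomposition.decompose'_eq, decomposition.decompose'_apply,
    ← homogeneousComponent_map]
  exact homogeneousComponent_mem_of_mem hI hp n

noncomputable def dehomogenize : MvPolynomial (Option σ) R →ₐ[R] MvPolynomial σ R :=
  aeval fun o => o.elim 1 X

theorem map_dehomogenize {S : Type*} [CommRing S] (f : R →+* S) (p : MvPolynomial (Option σ) R) :
    map f (dehomogenize p) = dehomogenize (map f p) := by
  induction p using MvPolynomial.induction_on with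
  | C a => simp [dehomogenize]
  | add p q hp hq => simp only [map_add, hp, hq]
  | mul_X p o hp => cases o <;> simp_all [dehomogenize]

theorem exists_isHomogeneous_dehomogenize_eq (p : MvPolynomial σ R) :
    ∃ q : MvPolynomial (Option σ) R, q.IsHomogeneous p.totalDegree ∧ dehomogenize q = p := by
  refine ⟨∑ n ∈ Finset.range (p.totalDegree + 1),
    rename some (homogeneousComponent n p) * X none ^ (p.totalDegree - n), ?_, ?_⟩
  · refine IsHomogeneous.sum _ _ _ fun n hn => ?_
    have := ((homogeneousComponent_isHomogeneous n p).rename_isHomogeneous (f := some)).mul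
      (isHomogeneous_X_pow (R := R) none (p.totalDegree - n))
    rwa [Nat.add_sub_cancel' (Finset.mem_range_succ_iff.1 hn)] at this
  · simp only [dehomogenize, map_sum, map_mul, map_pow, aeval_rename, aeval_X, Option.elim_none,
      one_pow, mul_one, Function.comp_def, Option.elim_some, aeval_X_left_apply]
    exact sum_homogeneousComponent p

theorem fg_comap_map_algebraMap {K : Type*} [IsDomain R] [ValuationRing R] [Field K] [Algebra R K]
    [FaithfulSMul R K] [Finite σ] (I : Ideal (MvPolynomial σ K)) :
    (I.comap (map (algebraMap R K))).FG := by
  set S := {q : MvPolynomial (Option σ) K |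
    SetLike.IsHomogeneousElem (homogeneousSubmodule (Option σ) K) q ∧ dehomogenize q ∈ I}
  set J := (Ideal.span S).comap (map (algebraMap R K))
  have hsat : ∀ c : R, c ≠ 0 → ∀ f, c • f ∈ J → f ∈ J := by
    intro c hc f hf
    have hc' : algebraMap R K c ≠ 0 :=
      (map_ne_zero_iff _ (FaithfulSMul.algebraMap_injective R K)).2 hc
    rw [Ideal.mem_comap, smul_eq_C_mul, map_mul, map_C] at hf
    have := Ideal.mul_mem_left _ (C (algebraMap R K c)⁻¹) hf
    rwa [← mul_assoc, ← map_mul, inv_mul_cancel₀ hc', map_one, one_mul] at this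
  have hJ : J.FG := fg_of_isHomogeneous_of_smul_mem_imp_mem
    ((Ideal.homogeneous_span _ S fun q hq => hq.1).comap_map _) hsat
  convert hJ.map (dehomogenize : MvPolynomial (Option σ) R →ₐ[R] _).toRingHom
  refine le_antisymm (fun p hp => ?_) (Ideal.map_le_iff_le_comap.2 fun q hq => ?_)
  · obtain ⟨q, hq, rfl⟩ := exists_isHomogeneous_dehomogenize_eq p
    refine Ideal.mem_map_of_mem _ (Ideal.subset_span ⟨⟨_, hq.map _⟩, ?_⟩)
    rwa [← map_dehomogenize]
  · rw [Ideal.mem_comap, AlgHom.toRingHom_eq_coe, RingHom.coe_coe, Ideal.mem_comap,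
      map_dehomogenize]
    exact (Ideal.span_le.2 fun s hs => hs.2 : Ideal.span S ≤ I.comap dehomogenize) hq

end MvPolynomial

theorem Ideal.fg_comap_of_finiteType {R K A B : Type*} [CommRing R] [IsDomain R] [ValuationRing R]
    [Field K] [Algebra R K] [FaithfulSMul R K] [CommRing A] [Algebra R A] [Algebra.FiniteType R A]
    [CommRing B] [Algebra K B] [Algebra R B] [IsScalarTower R K B] (ψ : A →ₐ[R] B)
    (I : Ideal B) : (I.comap ψ).FG := by
  obtain ⟨n, f, hf⟩ := Algebra.FiniteType.iff_quotient_mvPolynomial''.1 ‹_›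
  let g : MvPolynomial (Fin n) K →ₐ[K] B := aeval fun i => ψ (f (X i))
  have hsq : (ψ.comp f : MvPolynomial (Fin n) R →+* B) =
      (g : MvPolynomial (Fin n) K →+* B).comp (MvPolynomial.map (algebraMap R K)) := by
    refine ringHom_ext (fun r => ?_) fun i => ?_
    · simp [g, IsScalarTower.algebraMap_apply R K B]
    · simp [g]
  rw [← Ideal.map_comap_of_surjective f hf (I.comap ψ)]
  refine Ideal.FG.map ?_ _
  show (I.comap (ψ.comp f : MvPolynomial (Fin n) R →+* B)).FG
  rw [hsq, ← Ideal.comap_comap]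
  exact fg_comap_map_algebraMap _

theorem stmt18_general {K : Type*} [Field K] (O : ValuationSubring K) {n : ℕ}
    (I : Ideal (AddMonoidAlgebra K (Fin n →₀ ℤ))) :
    (I.comap
      ((AddMonoidAlgebra.lift ↥O (AddMonoidAlgebra K (Fin n →₀ ℤ)) (Fin n →₀ ℤ)
          (AddMonoidAlgebra.of K (Fin n →₀ ℤ))).toRingHom)).FG := by
  have : AddMonoid.FG (Fin n →₀ ℤ) := by
    rw [← AddGroup.fg_iff_addMonoid_fg, ← Module.Finite.iff_addGroup_fg]
    infer_instance
  exact Ideal.fg_comap_of_finiteType (K := K) _ I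

/-- Let `C` be an algebraically closed valued field with valuation ring
`C°` (a `ValuationSubring`, in particular a domain). For any ideal `I` of the Laurent
polynomial ring `C[x₁^±,…,x_n^±]` (modelled as the monoid algebra of `Fin n →₀ ℤ`), the
contraction `I ∩ C°[x₁^±,…,x_n^±]` — the preimage of `I` under the coefficientwise
inclusion `C°[x₁^±,…,x_n^±] → C[x₁^±,…,x_n^±]` — is a finitely generated ideal. -/
theorem stmt18 {K : Type*} [Field K] [IsAlgClosed K] (O : ValuationSubring K) {n : ℕ}
    (I : Ideal (AddMonoidAlgebra K (Fin n →₀ ℤ))) :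
    (I.comap
      ((AddMonoidAlgebra.lift ↥O (AddMonoidAlgebra K (Fin n →₀ ℤ)) (Fin n →₀ ℤ)
          (AddMonoidAlgebra.of K (Fin n →₀ ℤ))).toRingHom)).FG :=
  stmt18_general O I
end
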